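/- Single-term case of the convolution integral identity: Let 0 < α < 1, λ > 0, t > 0 and δ ∈ (0,t). Then ∫_{t−δ}^{t} (t−τ)^{−1} W(−λ (t−τ)^{−α};−α,0) dτ = ∫_{λ/δ^{α}}^{∞} W(−ζ;−α,1−α) dζ. -/

import Mathlib

open MeasureTheory Real Filter Set Topology intervalIntegral

/-- The Wright function `W(z; -β, δ) = ∑ z^k/(k! Γ(δ - βk))`, with `1/Γ` the
entire reciprocal Gamma function (here `Real.Gamma` vanishes at nonpositive
integers, so division gives the correct value `0`). -/
noncomputable def wrightW (β δ z : ℝ) : ℝ :=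
  ∑' k : ℕ, z ^ k / (k.factorial * Real.Gamma (δ - β * k))

/-- Laplace convolution on `(0, ∞)`. -/
noncomputable def laplaceConv (f g : ℝ → ℝ) : ℝ → ℝ :=
  fun t => ∫ τ in (0:ℝ)..t, f τ * g (t - τ)

/-- Iterated Laplace convolution `h₀ ∗ h₁ ∗ ⋯ ∗ hₙ`. -/
noncomputable def iterConv : (n : ℕ) → (Fin (n + 1) → ℝ → ℝ) → ℝ → ℝ
  | 0, h => h 0
  | n + 1, h => laplaceConv (iterConv n (fun i => h i.castSucc)) (h (Fin.last (n + 1)))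

/-- `S^μ_m(t; -ℓ₁, …, -ℓ_m; -α₁, …, -α_m)` with the decomposition `μ₁ = μ`,
`μ_j = 0` for `j ≥ 2`: the Laplace convolution of
`h_j(t) = t^{μ_j - 1} W(-ℓ_j t^{-α_j}; -α_j, μ_j)`.  Indices run over
`Fin (n+1)`, i.e. the number of terms is `m = n + 1 ≥ 1`. -/
noncomputable def Sconv (n : ℕ) (μ : ℝ) (α ℓ : Fin (n + 1) → ℝ) : ℝ → ℝ :=
  iterConv n (fun j t =>
    t ^ ((if j = 0 then μ else 0) - 1) *
      wrightW (α j) (if j = 0 then μ else 0) (-(ℓ j) * t ^ (-(α j))))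

/-- `Γ^μ₁(x,t)`. -/
noncomputable def Gam1 (n : ℕ) (α lam : Fin (n + 1) → ℝ) (μ x t : ℝ) : ℝ :=
  (4 * Real.pi) ^ (-(1/2 : ℝ)) *
    ∫ p in Set.Ioi (0:ℝ),
      p ^ (-(1/2 : ℝ)) * Real.exp (-(|x| ^ 2) / (4 * p)) *
        Sconv n μ α (fun j => lam j * p) t

/-- The kernel `E(x,t) = Γ⁰₁(x,t)`. -/
noncomputable def kerE (n : ℕ) (α lam : Fin (n + 1) → ℝ) (x t : ℝ) : ℝ :=
  Gam1 n α lam 0 x t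

/-- `E_x`, the spatial derivative of `E`. -/
noncomputable def kerEx (n : ℕ) (α lam : Fin (n + 1) → ℝ) (x t : ℝ) : ℝ :=
  deriv (fun y => kerE n α lam y t) x

/-- `E_xx`, the second spatial derivative of `E`. -/
noncomputable def kerExx (n : ℕ) (α lam : Fin (n + 1) → ℝ) (x t : ℝ) : ℝ :=
  deriv (fun y => kerEx n α lam y t) x

/-- The kernel `Z(x,t) = ∑ₖ λₖ Γ^{1-αₖ}₁(x,t)`. -/
noncomputable def kerZ (n : ℕ) (α lam : Fin (n + 1) → ℝ) (x t : ℝ) : ℝ :=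
  ∑ k : Fin (n + 1), lam k * Gam1 n α lam (1 - α k) x t

/-- `Z_x`, the spatial derivative of `Z`. -/
noncomputable def kerZx (n : ℕ) (α lam : Fin (n + 1) → ℝ) (x t : ℝ) : ℝ :=
  deriv (fun y => kerZ n α lam y t) x

/-- `Z_xx`, the second spatial derivative of `Z`. -/
noncomputable def kerZxx (n : ℕ) (α lam : Fin (n + 1) → ℝ) (x t : ℝ) : ℝ :=
  deriv (fun y => kerZx n α lam y t) x

lemma wright_shift (α z : ℝ) (hα : 0 < α) :
    wrightW α 0 z = -α * z * wrightW α (1 - α) z := by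
  unfold wrightW
  rw [← tsum_mul_left]
  have hinj : Function.Injective (fun k : ℕ => k + 1) := fun a b h => by simpa using h
  rw [← hinj.tsum_eq (f := fun k : ℕ => z ^ k / (k.factorial * Real.Gamma (0 - α * k)))]
  · apply tsum_congr
    intro k
    have hc : (-(α * (k + 1 : ℕ)) : ℝ) ≠ 0 := by
      have : (0:ℝ) < α * (k+1:ℕ) := by positivity
      linarith
    have hG : Real.Gamma (1 - α - α * k) = (-(α * (k+1:ℕ))) * Real.Gamma (-(α * (k+1:ℕ))) := by
      have := Real.Gamma_add_one hc
      rw [← this]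
      congr 1
      push_cast
      ring
    have h0 : (0 : ℝ) - α * ((k + 1 : ℕ) : ℝ) = -(α * (k+1:ℕ)) := by ring
    simp only [h0, hG]
    have hfac : ((k+1).factorial : ℝ) = (k+1 : ℕ) * k.factorial := by
      rw [Nat.factorial_succ]; push_cast; ring
    rw [pow_succ, hfac]
    set G := Real.Gamma (-(α * (k+1:ℕ)))
    have key : z ^ k * z / (((k:ℝ)+1) * k.factorial * G)
        = -α * z * (z ^ k / (k.factorial * (-(α * ((k:ℝ)+1)) * G))) := by
      rcases eq_or_ne G 0 with hG0 | hG0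
      · simp [hG0]
      · have hk1 : ((k:ℝ)+1) ≠ 0 := by positivity
        have hkf : (k.factorial : ℝ) ≠ 0 := by positivity
        field_simp
    push_cast at key ⊢
    convert key using 2 <;> push_cast <;> ring
  · intro x hx
    simp only [Function.mem_support, Set.mem_range] at *
    rcases Nat.eq_zero_or_pos x with rfl | hpos
    · simp [Real.Gamma_zero] at hx
    · exact ⟨x - 1, by omega⟩

lemma image_rpow_Ioo (α lam δ : ℝ) (hα0 : 0 < α) (hlam : 0 < lam) (hδ : 0 < δ) :
    (fun s : ℝ => lam * s ^ (-α)) '' Set.Ioo 0 δ = Set.Ioi (lam / δ ^ α) := by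
  ext ζ
  constructor
  · rintro ⟨s, ⟨hs0, hsδ⟩, rfl⟩
    have h1 : δ ^ (-α) < s ^ (-α) := Real.rpow_lt_rpow_of_neg hs0 hsδ (by linarith)
    have h2 : lam / δ ^ α = lam * δ ^ (-α) := by
      rw [Real.rpow_neg hδ.le, div_eq_mul_inv]
    rw [Set.mem_Ioi, h2]
    exact mul_lt_mul_of_pos_left h1 hlam
  · intro hζ
    rw [Set.mem_Ioi] at hζ
    have hδα : (0:ℝ) < δ ^ α := Real.rpow_pos_of_pos hδ α
    have hζ0 : 0 < ζ := lt_trans (by positivity) hζ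
    refine ⟨(lam / ζ) ^ (α⁻¹), ⟨by positivity, ?_⟩, ?_⟩
    · have h1 : lam / ζ < δ ^ α := by
        rw [div_lt_iff₀ hζ0]
        rw [div_lt_iff₀ hδα] at hζ
        linarith [mul_comm ζ (δ ^ α)]
      calc (lam / ζ) ^ α⁻¹ < (δ ^ α) ^ α⁻¹ :=
            Real.rpow_lt_rpow (by positivity) h1 (by positivity)
        _ = δ := Real.rpow_rpow_inv hδ.le hα0.ne'
    · have h : ((lam / ζ) ^ (α⁻¹:ℝ)) ^ (-α) = (lam / ζ)⁻¹ := by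
        have hb : (0:ℝ) ≤ lam / ζ := by positivity
        rw [← Real.rpow_mul hb, show α⁻¹ * (-α) = -1 by field_simp, Real.rpow_neg_one]
      simp only [h]
      field_simp

/-- Single-term case of the convolution integral identity:
`∫_{t-δ}^t (t-τ)⁻¹ W(-λ(t-τ)^{-α}; -α, 0) dτ = ∫_{λ/δ^α}^∞ W(-ζ; -α, 1-α) dζ`. -/
theorem single_term_integral_identity
    (α lam : ℝ) (hα0 : 0 < α) (hα1 : α < 1) (hlam : 0 < lam)
    (t δ : ℝ) (ht : 0 < t) (hδ : δ ∈ Set.Ioo 0 t) :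
    ∫ τ in (t - δ)..t, (t - τ)⁻¹ * wrightW α 0 (-lam * (t - τ) ^ (-α)) =
      ∫ ζ in Set.Ioi (lam / δ ^ α), wrightW α (1 - α) (-ζ) := by
  obtain ⟨hδ0, hδt⟩ := hδ
  set F : ℝ → ℝ := fun s => s⁻¹ * wrightW α 0 (-lam * s ^ (-α)) with hF
  have step1 : (∫ τ in (t - δ)..t, (t - τ)⁻¹ * wrightW α 0 (-lam * (t - τ) ^ (-α)))
      = ∫ s in Set.Ioo (0:ℝ) δ, F s := by
    have := intervalIntegral.integral_comp_sub_left F t (a := t - δ) (b := t)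
    simp only [sub_self, sub_sub_cancel] at this
    rw [show (∫ τ in (t - δ)..t, (t - τ)⁻¹ * wrightW α 0 (-lam * (t - τ) ^ (-α)))
        = ∫ τ in (t - δ)..t, F (t - τ) from rfl, this,
      intervalIntegral.integral_of_le hδ0.le, MeasureTheory.integral_Ioc_eq_integral_Ioo]
  rw [step1]
  -- change of variables
  set f : ℝ → ℝ := fun s => lam * s ^ (-α) with hf
  set f' : ℝ → ℝ := fun s => lam * (-α * s ^ (-α - 1)) with hf'
  have himg := image_rpow_Ioo α lam δ hα0 hlam hδ0
  have hderiv : ∀ s ∈ Set.Ioo (0:ℝ) δ, HasDerivWithinAt f (f' s) (Set.Ioo 0 δ) s := by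
    intro s hs
    exact ((Real.hasDerivAt_rpow_const (Or.inl hs.1.ne')).const_mul lam).hasDerivWithinAt
  have hinj : Set.InjOn f (Set.Ioo 0 δ) := by
    have : StrictAntiOn f (Set.Ioo 0 δ) := by
      intro a ha b hb hab
      exact mul_lt_mul_of_pos_left
        (Real.rpow_lt_rpow_of_neg ha.1 hab (by linarith)) hlam
    exact this.injOn
  have hcov := MeasureTheory.integral_image_eq_integral_abs_deriv_smul
    (measurableSet_Ioo) hderiv hinj (fun ζ => wrightW α (1 - α) (-ζ))
  rw [himg] at hcov
  rw [hcov]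
  apply MeasureTheory.setIntegral_congr_fun measurableSet_Ioo
  intro s hs
  obtain ⟨hs0, hsδ⟩ := hs
  have hspos : (0:ℝ) < s ^ (-α - 1) := Real.rpow_pos_of_pos hs0 _
  simp only [hF, hf, hf', smul_eq_mul]
  have habs : |lam * (-α * s ^ (-α - 1))| = lam * α * s ^ (-α - 1) := by
    rw [show lam * (-α * s ^ (-α - 1)) = -(lam * α * s ^ (-α - 1)) by ring, abs_neg,
      abs_of_pos (by positivity)]
  rw [habs, show -lam * s ^ (-α) = -(lam * s ^ (-α)) by ring, wright_shift α _ hα0]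
  have hexp : s⁻¹ * s ^ (-α) = s ^ (-α - 1) := by
    rw [← Real.rpow_neg_one s, ← Real.rpow_add hs0]
    ring_nf
  linear_combination (α * lam * wrightW α (1 - α) (-(lam * s ^ (-α)))) * hexp
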